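/- With g_{u,v} defined as above on A₂, if g_{u,v}(⟦q₀,q₁,...,q_r⟧) = ⟦q₀',q₁',...,q_s'⟧, then for every integer n, g_{u,v}(⟦q₀+n,q₁,...,q_r⟧) = ⟦q₀'+n,q₁',...,q_s'⟧; i.e., changing the first entry by n changes only the first entry of the output, by n. -/

import Mathlib

/-- Evaluation of a finite continued fraction `[q₀, q₁, …, q_r]`. -/
def E : List ℤ → ℚ
  | [] => 0
  | [q] => (q : ℚ)
  | q :: l => (q : ℚ) + 1 / E l

/-- Concatenation `⊕` of finite sequences, merging when the second begins with `0`. -/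
def oplus (a b : List ℤ) : List ℤ :=
  match b with
  | [] => a
  | p :: ps =>
    if p = 0 then
      match ps with
      | [] => a
      | p1 :: ps' => a.dropLast ++ (a.getLast! + p1) :: ps'
    else a ++ (p :: ps)

/-- No tail continued fraction `[q_i, …, q_r]` (for `0 < i < r`) evaluates to `0`. -/
def TailsNonzero (l : List ℤ) : Prop :=
  ∀ i, 0 < i → i + 1 < l.length → E (l.drop i) ≠ 0

/-- `[q₀, …, q_r]` is a short continued fraction: `q_i ≥ 1` for `0 < i < r`, `q_r > 1` if `r > 0`. -/
def IsShortCF (l : List ℤ) : Prop :=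
  l ≠ [] ∧ (∀ i, 0 < i → i + 1 < l.length → 1 ≤ l.getD i 0) ∧
    (1 < l.length → 1 < l.getD (l.length - 1) 0)

/-- Membership in `A₁`. -/
def memA1 (l : List ℤ) : Prop := IsShortCF l ∧ TailsNonzero l

/-- Membership in `A₂`: all entries after the first have absolute value `> 1`. -/
def memA2 (l : List ℤ) : Prop :=
  l ≠ [] ∧ (∀ i, 0 < i → i < l.length → 1 < |l.getD i 0|) ∧ TailsNonzero l

/-- The `(u,v)`-divisibility property: `v` divides even-indexed entries, `u` odd-indexed ones. -/
def DivProp (u v : ℤ) (l : List ℤ) : Prop :=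
  ∀ i, i < l.length → (if i % 2 = 0 then v else u) ∣ l.getD i 0

/-- The function `f_{u,v} : A₁ → A₂`. -/
def fCF (u v : ℤ) : List ℤ → List ℤ
  | [] => []
  | [q0] => [q0]
  | q0 :: q1 :: rest =>
    if ¬ (v ∣ q0) ∧ q1 = 1 then
      match rest with
      | [] => [q0 + 1]
      | q2 :: rest' => oplus [q0 + 1] ((fCF v u ((q2 + 1) :: rest')).map (fun x => -x))
    else if ¬ (v ∣ q0) ∧ q1 = 2 then
      match rest with
      | [] => [q0 + 1, -2]
      | q2 :: rest' => oplus [q0 + 1] (fCF v u (-2 :: (q2 + 1) :: rest'))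
    else oplus [q0] (fCF v u (q1 :: rest))
termination_by l => l.length
decreasing_by all_goals (simp_all [List.length]; try omega)

/-- The function `g_{u,v} : A₂ → A₁`. -/
def gCF (u v : ℤ) : List ℤ → List ℤ
  | [] => []
  | [q0] => [q0]
  | q0 :: q1 :: rest =>
    if (q1 < 0 ∧ u ≠ 2) ∨ (q1 < -2 ∧ u = 2) then
      oplus [q0 - 1, 1] ((gCF v u (((q1 + 1) :: rest).map (fun x => -x))))
    else if q1 = -2 ∧ u = 2 then
      match rest with
      | [] => [q0 - 1, 2]
      | q2 :: rest' => oplus [q0 - 1, 2] (gCF v u ((q2 - 1) :: rest'))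
    else oplus [q0] (gCF v u (q1 :: rest))
termination_by l => l.length
decreasing_by all_goals (simp_all [List.length]; try omega)

/- The case distinctions defining `g_{u,v}(⟦q₀, q₁, …⟧)` look only at `q₁, …, q_r` and at `u`,
and `q₀` enters solely as the first entry of the left operand of `⊕`. Since `⊕` adds a constant
(possibly `0`) to the last entry of its left operand and leaves the others alone, the output is
`⟦q₀ + c, t⟧` with `c` and `t` independent of `q₀`. -/

theorem oplus_cons_of_ne_nil {a : List ℤ} (ha : a ≠ []) (x : ℤ) (b : List ℤ) :
    oplus (x :: a) b = x :: oplus a b := by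
  rcases b with _ | ⟨p, _ | ⟨p1, ps⟩⟩
  · rfl
  · by_cases hp : p = 0 <;> simp [oplus, hp]
  · obtain ⟨y, a, rfl⟩ := List.exists_cons_of_ne_nil ha
    by_cases hp : p = 0 <;> simp [oplus, hp]

theorem exists_oplus_singleton_eq_add_cons (b : List ℤ) :
    ∃ c t, ∀ x, oplus [x] b = (x + c) :: t := by
  rcases b with _ | ⟨p, _ | ⟨p1, ps⟩⟩
  · exact ⟨0, [], by simp [oplus]⟩
  · exact ⟨0, if p = 0 then [] else [p], by by_cases hp : p = 0 <;> simp [oplus, hp]⟩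
  · by_cases hp : p = 0
    · exact ⟨p1, ps, by simp [oplus, hp]⟩
    · exact ⟨0, p :: p1 :: ps, by simp [oplus, hp]⟩

theorem exists_gCF_cons_eq_add_cons (u v : ℤ) :
    ∀ rest : List ℤ, ∃ c t, ∀ x, gCF u v (x :: rest) = (x + c) :: t
  | [] => ⟨0, [], by simp [gCF]⟩
  | q1 :: rest => by
    by_cases hneg : (q1 < 0 ∧ u ≠ 2) ∨ (q1 < -2 ∧ u = 2)
    · refine ⟨-1, oplus [1] (gCF v u (((q1 + 1) :: rest).map (fun x => -x))), fun x => ?_⟩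
      rw [gCF.eq_def]
      simp only [if_pos hneg, oplus_cons_of_ne_nil (List.cons_ne_nil 1 [])]
      ring_nf
    by_cases htwo : q1 = -2 ∧ u = 2
    · rcases rest with _ | ⟨q2, rest⟩
      · refine ⟨-1, [2], fun x => ?_⟩
        rw [gCF.eq_def]
        simp only [if_neg hneg, if_pos htwo]
        ring_nf
      · refine ⟨-1, oplus [2] (gCF v u ((q2 - 1) :: rest)), fun x => ?_⟩
        rw [gCF.eq_def]
        simp only [if_neg hneg, if_pos htwo, oplus_cons_of_ne_nil (List.cons_ne_nil 2 [])]
        ring_nf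
    · obtain ⟨c, t, ht⟩ := exists_oplus_singleton_eq_add_cons (gCF v u (q1 :: rest))
      refine ⟨c, t, fun x => ?_⟩
      rw [gCF.eq_def]
      simp only [if_neg hneg, if_neg htwo, ht]

theorem gCF_firstEntry (u v : ℤ)
    (q0 : ℤ) (rest : List ℤ) (n : ℤ) :
    ∃ q0' rest', gCF u v (q0 :: rest) = q0' :: rest' ∧
      gCF u v ((q0 + n) :: rest) = (q0' + n) :: rest' := by
  obtain ⟨c, t, hgCF⟩ := exists_gCF_cons_eq_add_cons u v rest
  exact ⟨q0 + c, t, hgCF q0, by rw [hgCF, add_right_comm]⟩
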